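/- For the root system Bₙ (or Dₙ, n ≥ 4), with highest root ρ₀ = ρ₀∨ = ϖ₂, the Chebyshev identity T_{2ϖ₁}(z) = 2n z₁² − 1 − 2(n−1) z₂ holds, and the constraint T_0 − T_{2ϖ₁} ≥ 0 valid on the Chebyshev image T implies z₂ ≥ (n z₁² − 1)/(n−1) ≥ −1/(n−1) for all z ∈ T. Hence the spectral bound gives χ(Λ(Bₙ)) = χ(Λ(Dₙ)) ≥ 1 − 1/(−1/(n−1)) = n. -/

import Mathlib

noncomputable section
open scoped BigOperators

abbrev EV (n : ℕ) := EuclideanSpace ℝ (Fin n)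

/-- The hyperoctahedral group `Sₙ ⋉ {±1}ⁿ` (the Weyl group of `Bₙ`/`Cₙ`) acting on `ℝⁿ`
by permutations and sign changes of coordinates. -/
def sgnAct {n : ℕ} (g : Equiv.Perm (Fin n) × (Fin n → Bool)) (μ : EV n) : EV n :=
  WithLp.toLp 2 (fun j => (if g.2 j then (1 : ℝ) else -1) * μ (g.1 j))

/-- The generalized cosine for the Weyl group of `Bₙ`/`Cₙ`. -/
def cGencos {n : ℕ} (μ u : EV n) : ℂ :=
  ((Fintype.card (Equiv.Perm (Fin n) × (Fin n → Bool)) : ℂ))⁻¹ *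
    ∑ g : Equiv.Perm (Fin n) × (Fin n → Bool),
      Complex.exp (-(2 * Real.pi * Complex.I) * ((inner ℝ (sgnAct g μ) u : ℝ) : ℂ))

/-- The fundamental weight `ϖ₁ = e₁` of `Cₙ`. -/
def cϖ₁ {n : ℕ} : EV n := WithLp.toLp 2 (fun j => if (j : ℕ) = 0 then 1 else 0)

/-- The fundamental weight `ϖ₂ = e₁ + e₂` of `Cₙ`/`Bₙ`. -/
def cϖ₂ {n : ℕ} : EV n := WithLp.toLp 2 (fun j => if (j : ℕ) < 2 then 1 else 0)

/-!
Summing over the sign changes first turns the generalized cosine into an average over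
permutations of products of ordinary cosines, `T_μ(u) = (n!)⁻¹ ∑_σ ∏ᵢ cos 2π μᵢ u_{σ i}`.
With `cⱼ = cos 2πuⱼ`, `S = ∑ cⱼ` and `Q = ∑ cⱼ²` this gives `T_{ϖ₁} = S/n`,
`T_{2ϖ₁} = (2Q − n)/n` and `T_{ϖ₂} = (S² − Q)/(n(n−1))`, so the Chebyshev identity is a
polynomial identity in `S` and `Q`. As an average of products of cosines, `T_{2ϖ₁} ≤ 1 = T₀`,
and solving the identity for `z₂` turns this into the lower bound on `z₂`. The colouring bound
comes from the `n`-clique `{e₁ + eᵢ}` of the lattice graph (where `e₁ + e₁ = 2e₁`).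
-/

open Finset Real
open scoped Nat

lemma inner_sgnAct {n : ℕ} (g : Equiv.Perm (Fin n) × (Fin n → Bool)) (μ u : EV n) :
    inner ℝ (sgnAct g μ) u = ∑ j, (if g.2 j then (1 : ℝ) else -1) * (μ (g.1 j) * u j) := by
  simp only [PiLp.inner_apply, sgnAct, RCLike.inner_apply, conj_trivial]
  exact sum_congr rfl fun j _ => by ring

lemma sum_signs_exp_inner_sgnAct {n : ℕ} (σ : Equiv.Perm (Fin n)) (μ u : EV n) :
    ∑ ε : Fin n → Bool,
        Complex.exp (-(2 * π * Complex.I) * ((inner ℝ (sgnAct (σ, ε) μ) u : ℝ) : ℂ))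
      = 2 ^ n * Complex.ofReal (∏ j, Real.cos (2 * π * (μ (σ j) * u j))) := by
  simp_rw [inner_sgnAct, Complex.ofReal_sum, Finset.mul_sum, Complex.exp_sum]
  rw [← Fintype.prod_sum fun j (b : Bool) => Complex.exp
      (-(2 * π * Complex.I) * (((if b then 1 else -1) * (μ (σ j) * u j) : ℝ) : ℂ)),
    Complex.ofReal_prod, ← Fin.prod_const, ← prod_mul_distrib]
  refine prod_congr rfl fun j _ => ?_
  rw [Fintype.sum_bool, Complex.ofReal_cos, Complex.two_cos]
  simp only [if_true, Bool.false_eq_true, if_false]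
  push_cast
  ring_nf

lemma prod_cos_perm_symm {n : ℕ} (σ : Equiv.Perm (Fin n)) (μ u : EV n) :
    ∏ j, Real.cos (2 * π * (μ (σ j) * u j)) = ∏ i, Real.cos (2 * π * (μ i * u (σ⁻¹ i))) := by
  rw [← σ.symm.prod_comp]
  simp [Equiv.Perm.inv_def]

lemma cGencos_eq_ofReal {n : ℕ} (μ u : EV n) :
    cGencos μ u = Complex.ofReal
      ((n ! : ℝ)⁻¹ * ∑ σ : Equiv.Perm (Fin n), ∏ i, Real.cos (2 * π * (μ i * u (σ i)))) := by
  rw [cGencos, Fintype.sum_prod_type]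
  simp_rw [sum_signs_exp_inner_sgnAct, prod_cos_perm_symm]
  rw [← Equiv.sum_comp (Equiv.inv (Equiv.Perm (Fin n)))]
  simp only [Equiv.inv_apply, inv_inv, Fintype.card_prod, Fintype.card_perm, Fintype.card_fin,
    Fintype.card_fun, Fintype.card_bool, ← mul_sum]
  push_cast
  field_simp

lemma ofReal_re_cGencos {n : ℕ} (μ u : EV n) : Complex.ofReal (cGencos μ u).re = cGencos μ u := by
  rw [cGencos_eq_ofReal, Complex.ofReal_re]

lemma re_cGencos_le_one {n : ℕ} (μ u : EV n) : (cGencos μ u).re ≤ 1 := by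
  have hprod (σ : Equiv.Perm (Fin n)) : ∏ i, Real.cos (2 * π * (μ i * u (σ i))) ≤ 1 := by
    refine (le_abs_self _).trans ?_
    rw [abs_prod]
    exact prod_le_one (fun _ _ => abs_nonneg _) fun _ _ => abs_cos_le_one _
  rw [cGencos_eq_ofReal, Complex.ofReal_re]
  calc (n ! : ℝ)⁻¹ * ∑ σ : Equiv.Perm (Fin n), ∏ i, Real.cos (2 * π * (μ i * u (σ i)))
      ≤ (n ! : ℝ)⁻¹ * ∑ _σ : Equiv.Perm (Fin n), 1 := by gcongr with σ; exact hprod σ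
    _ = 1 := by simp [Fintype.card_perm, Nat.factorial_ne_zero]

section PermSums

variable {M : Type*}

lemma sum_perm_apply_zero [AddCommMonoid M] {m : ℕ} (h : Fin (m + 1) → M) :
    ∑ σ : Equiv.Perm (Fin (m + 1)), h (σ 0) = m ! • ∑ a, h a := by
  rw [← Equiv.sum_comp Equiv.Perm.decomposeFin.symm, Fintype.sum_prod_type]
  simp [smul_sum, Fintype.card_perm]

lemma sum_swap_zero_succ [AddCancelCommMonoid M] {m : ℕ} (p : Fin (m + 1))
    (G : Fin (m + 1) → M) :
    ∑ q : Fin m, G (Equiv.swap 0 p q.succ) = ∑ b ∈ univ.erase p, G b := by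
  have h := Equiv.sum_comp (Equiv.swap 0 p) G
  rw [Fin.sum_univ_succ, Equiv.swap_apply_left, ← add_sum_erase _ _ (mem_univ p)] at h
  exact add_left_cancel h

lemma sum_perm_apply_zero_one [AddCancelCommMonoid M] {m : ℕ}
    (H : Fin (m + 2) → Fin (m + 2) → M) :
    ∑ σ : Equiv.Perm (Fin (m + 2)), H (σ 0) (σ 1) = m ! • ∑ p, ∑ b ∈ univ.erase p, H p b := by
  rw [← Equiv.sum_comp Equiv.Perm.decomposeFin.symm, Fintype.sum_prod_type, smul_sum]
  refine sum_congr rfl fun p _ => ?_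
  simp only [Equiv.Perm.decomposeFin_symm_apply_zero, Equiv.Perm.decomposeFin_symm_apply_one]
  rw [sum_perm_apply_zero fun q => H p (Equiv.swap 0 p q.succ), sum_swap_zero_succ]

end PermSums

lemma cGencos_smul_cϖ₁ {m : ℕ} (a : ℝ) (u : EV (m + 1)) :
    cGencos (a • cϖ₁) u
      = Complex.ofReal ((m + 1 : ℝ)⁻¹ * ∑ j, Real.cos (2 * π * (a * u j))) := by
  have hprod (σ : Equiv.Perm (Fin (m + 1))) :
      ∏ i, Real.cos (2 * π * ((a • cϖ₁ : EV (m + 1)) i * u (σ i)))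
        = Real.cos (2 * π * (a * u (σ 0))) := by
    rw [Fintype.prod_eq_single 0 fun i hi => by simp [cϖ₁, hi]]
    simp [cϖ₁]
  rw [cGencos_eq_ofReal]
  congr 1
  simp only [hprod, sum_perm_apply_zero fun b => Real.cos (2 * π * (a * u b)), nsmul_eq_mul,
    Nat.factorial_succ]
  push_cast
  field_simp

lemma cGencos_cϖ₂ {m : ℕ} (u : EV (m + 2)) :
    cGencos cϖ₂ u = Complex.ofReal (((m + 2 : ℝ) * (m + 1))⁻¹ *
      ((∑ j, Real.cos (2 * π * u j)) ^ 2 - ∑ j, Real.cos (2 * π * u j) ^ 2)) := by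
  set c : Fin (m + 2) → ℝ := fun j => Real.cos (2 * π * u j)
  have hprod (σ : Equiv.Perm (Fin (m + 2))) :
      ∏ i, Real.cos (2 * π * ((cϖ₂ : EV (m + 2)) i * u (σ i))) = c (σ 0) * c (σ 1) := by
    rw [Fintype.prod_eq_mul 0 1 (by simp) fun i hi => ?_]
    · simp [c, cϖ₂]
    · have h2 : ¬ (i : ℕ) ≤ 1 := by
        simp only [ne_eq, Fin.ext_iff, Fin.val_zero, Fin.val_one] at hi; omega
      simp [cϖ₂, h2]
  have hpairs : ∑ p, ∑ b ∈ univ.erase p, c p * c b = (∑ j, c j) ^ 2 - ∑ j, c j ^ 2 := by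
    simp_rw [← mul_sum, sum_erase_eq_sub (mem_univ _), mul_sub, sum_sub_distrib, sq, sum_mul]
  rw [cGencos_eq_ofReal]
  congr 1
  simp only [hprod, sum_perm_apply_zero_one fun p b => c p * c b, hpairs, nsmul_eq_mul,
    Nat.factorial_succ]
  push_cast
  field_simp
  ring

lemma cGencos_cϖ₁ {m : ℕ} (u : EV (m + 1)) :
    cGencos cϖ₁ u = Complex.ofReal ((m + 1 : ℝ)⁻¹ * ∑ j, Real.cos (2 * π * u j)) := by
  simpa using cGencos_smul_cϖ₁ 1 u

lemma cGencos_two_smul_cϖ₁ {n : ℕ} (hn : 2 ≤ n) (u : EV n) :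
    cGencos ((2 : ℝ) • cϖ₁) u
      = 2 * n * (cGencos cϖ₁ u) ^ 2 - 1 - 2 * (n - 1 : ℂ) * cGencos cϖ₂ u := by
  obtain ⟨m, rfl⟩ : ∃ m, n = m + 2 := ⟨n - 2, by omega⟩
  have hdouble (j : Fin (m + 2)) :
      Real.cos (2 * π * (2 * u j)) = 2 * Real.cos (2 * π * u j) ^ 2 - 1 := by
    rw [← Real.cos_two_mul]; ring_nf
  rw [cGencos_smul_cϖ₁ (m := m + 1), cGencos_cϖ₁ (m := m + 1), cGencos_cϖ₂]
  simp only [hdouble, sum_sub_distrib, ← mul_sum, sum_const, card_univ, Fintype.card_fin]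
  norm_cast
  push_cast
  field_simp
  ring

lemma re_cGencos_two_smul_cϖ₁ {n : ℕ} (hn : 2 ≤ n) (u : EV n) :
    (cGencos ((2 : ℝ) • cϖ₁) u).re
      = 2 * n * (cGencos cϖ₁ u).re ^ 2 - 1 - 2 * (n - 1 : ℝ) * (cGencos cϖ₂ u).re := by
  have h := cGencos_two_smul_cϖ₁ hn u
  rw [← ofReal_re_cGencos ((2 : ℝ) • cϖ₁), ← ofReal_re_cGencos cϖ₁,
    ← ofReal_re_cGencos cϖ₂] at h
  exact_mod_cast h

lemma natAbs_single_sub_single_le_one {ι : Type*} [DecidableEq ι] (i j t : ι) :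
    ((Pi.single i 1 - Pi.single j 1 : ι → ℤ) t).natAbs ≤ 1 := by
  simp only [Pi.sub_apply, Pi.single_apply]
  split_ifs <;> simp

lemma sum_natAbs_single_sub_single {ι : Type*} [Fintype ι] [DecidableEq ι] {i j : ι}
    (hij : i ≠ j) : ∑ t, ((Pi.single i 1 - Pi.single j 1 : ι → ℤ) t).natAbs = 2 := by
  rw [Fintype.sum_eq_add i j hij fun t ht => by simp [ht.1, ht.2]]
  simp [hij, hij.symm]

lemma card_le_of_coloring {ι κ : Type*} [Fintype ι] [DecidableEq ι] [Fintype κ] (i₀ : ι)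
    (C : (ι → ℤ) → κ)
    (hC : ∀ u v : ι → ℤ, (2 : ℤ) ∣ (∑ i, u i) → (2 : ℤ) ∣ (∑ i, v i) →
      ((∑ i, (u i - v i).natAbs) = 2 ∧ ∀ t, (u t - v t).natAbs ≤ 1) → C u ≠ C v) :
    Fintype.card ι ≤ Fintype.card κ := by
  let v : ι → ι → ℤ := fun i => Pi.single i₀ 1 + Pi.single i 1
  have hsum (i : ι) : (2 : ℤ) ∣ ∑ t, v i t := by
    simp [v, sum_add_distrib]
  have hdiff (i j : ι) : v i - v j = Pi.single i 1 - Pi.single j 1 := add_sub_add_left_eq_sub ..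
  refine Fintype.card_le_of_injective (fun i => C (v i)) fun i j hcol => ?_
  by_contra hij
  refine hC (v i) (v j) (hsum i) (hsum j) ⟨?_, fun t => ?_⟩ hcol
  · simpa only [← Pi.sub_apply, hdiff] using sum_natAbs_single_sub_single hij
  · simpa only [← Pi.sub_apply, hdiff] using natAbs_single_sub_single_le_one i j t

/-- For the root system `Bₙ` (equally `Dₙ`), with highest root
`ρ₀∨ = ϖ₂`: the Chebyshev identity `T_{2ϖ₁} = 2n z₁² − 1 − 2(n−1) z₂` holds on the
Chebyshev image, the constraint `T₀ − T_{2ϖ₁} ≥ 0` valid on the image forces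
`z₂ ≥ (n z₁² − 1)/(n−1) ≥ −1/(n−1)` there, and hence the spectral bound gives
`χ(Λ(Bₙ)) = χ(Λ(Dₙ)) ≥ n` for the lattice graph of the common coroot lattice
`{u ∈ ℤⁿ : Σuᵢ even}` avoiding its strict Voronoi vectors `W ϖ₂ = {±eᵢ ± eⱼ}`. -/
theorem statement14 {n : ℕ} (hn : 2 ≤ n) :
    -- the Chebyshev identity `T_{2ϖ₁} = 2n z₁² − 1 − 2(n−1) z₂` on the image:
    (∀ u : EV n, cGencos ((2 : ℝ) • cϖ₁) u
        = 2 * n * (cGencos cϖ₁ u) ^ 2 - 1 - 2 * (n - 1 : ℂ) * cGencos cϖ₂ u) ∧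
    -- `z₂ ≥ (n z₁² − 1)/(n−1)` on the image:
    (∀ u : EV n,
      ((n * ((cGencos cϖ₁ u).re) ^ 2 - 1) / (n - 1) : ℝ) ≤ (cGencos cϖ₂ u).re) ∧
    -- `z₂ ≥ −1/(n−1)` on the image:
    (∀ u : EV n, -(1 / (n - 1 : ℝ)) ≤ (cGencos cϖ₂ u).re) ∧
    -- the spectral bound: every proper coloring of the lattice graph of the coroot
    -- lattice of `Bₙ`/`Dₙ` uses at least `n` colors:
    (∀ (k : ℕ) (C : (Fin n → ℤ) → Fin k),
      (∀ u v : Fin n → ℤ, (2 : ℤ) ∣ (∑ i, u i) → (2 : ℤ) ∣ (∑ i, v i) →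
        ((∑ i, (u i - v i).natAbs) = 2 ∧ ∀ t, (u t - v t).natAbs ≤ 1) →
        C u ≠ C v) → n ≤ k) := by
  have hn₁ : (0 : ℝ) < n - 1 := by
    have : (2 : ℝ) ≤ n := by exact_mod_cast hn
    linarith
  have lower (u : EV n) :
      ((n * ((cGencos cϖ₁ u).re) ^ 2 - 1) / (n - 1) : ℝ) ≤ (cGencos cϖ₂ u).re := by
    rw [div_le_iff₀ hn₁]
    linarith [re_cGencos_two_smul_cϖ₁ hn u, re_cGencos_le_one ((2 : ℝ) • cϖ₁) u]
  refine ⟨cGencos_two_smul_cϖ₁ hn, lower, fun u => (lower u).trans' ?_, fun k C hC => ?_⟩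
  · rw [← neg_div]
    gcongr
    nlinarith [sq_nonneg (cGencos cϖ₁ u).re]
  · simpa using card_le_of_coloring ⟨0, by omega⟩ C hC
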